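/- arXiv:2407.20011 — 2 statements merged into one kernel-verified Lean document; each statement's English description precedes it below -/
import Mathlib

section
/- Let ε > 0 and let u, v, a, χ ∈ ℝ satisfy 0 ≤ χ ≤ 1, χ = 1 whenever u < v, and χ = 0 whenever u > v. Then (H_ε(v − a) − χ)·(a − u) ≤ ε. -/
/-!
Both factors have a sign forced by the hypotheses except in one configuration. If `a > u`,
then either `v ≤ a`, where `H_ε(v - a) = 0`, or `u < a < v`, where `χ = 1`; in both cases the
first factor is `≤ 0`. If `a ≤ u`, the product is `(χ - H_ε(v - a)) (u - a)`, which is `≤ 0`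
when `v - a ≥ ε` (then `H_ε = 1`) or `u > v` (then `χ = 0`); otherwise `0 ≤ u - a ≤ v - a < ε`
and `χ - H_ε ≤ 1`.
-/

/-- The regularized Heaviside function `H_ε`. -/
noncomputable def Heps (ε t : ℝ) : ℝ := max 0 (min (t / ε) 1)

lemma Heps_nonneg (ε t : ℝ) : 0 ≤ Heps ε t := le_max_left _ _

lemma Heps_le_one (ε t : ℝ) : Heps ε t ≤ 1 :=
  max_le zero_le_one (min_le_right _ _)

lemma Heps_of_nonpos {ε t : ℝ} (hε : 0 ≤ ε) (ht : t ≤ 0) : Heps ε t = 0 :=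
  max_eq_left ((min_le_left _ _).trans (div_nonpos_of_nonpos_of_nonneg ht hε))

lemma Heps_of_le {ε t : ℝ} (hε : 0 < ε) (ht : ε ≤ t) : Heps ε t = 1 := by
  have : 1 ≤ t / ε := (one_le_div hε).2 ht
  rw [Heps, min_eq_right this, max_eq_right zero_le_one]

theorem stmt3 (ε u v a χ : ℝ) (hε : 0 < ε)
    (hχ0 : 0 ≤ χ) (hχ1 : χ ≤ 1)
    (hlt : u < v → χ = 1) (hgt : u > v → χ = 0) :
    (Heps ε (v - a) - χ) * (a - u) ≤ ε := by
  rcases lt_or_ge u a with hua | hau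
  · suffices Heps ε (v - a) - χ ≤ 0 by nlinarith
    rcases le_or_gt v a with hva | hav
    · rw [Heps_of_nonpos hε.le (sub_nonpos.2 hva)]
      linarith
    · rw [hlt (hua.trans hav)]
      linarith [Heps_le_one ε (v - a)]
  rcases le_or_gt ε (v - a) with hεva | hvaε
  · rw [Heps_of_le hε hεva]
    nlinarith
  rcases lt_or_ge v u with hvu | huv
  · rw [hgt hvu]
    nlinarith [Heps_nonneg ε (v - a)]
  · have : χ - Heps ε (v - a) ≤ 1 := by linarith [Heps_nonneg ε (v - a)]
    nlinarith
end

section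
/- Let (X, μ) be a measure space, 1 < p < ∞, p′ = p/(p−1), let λ₊, λ₋ ∈ L^{p′}(μ) be nonnegative, v ∈ L^p(μ), let ε_n > 0 with ε_n → 0, and let u_n → u in L^p(μ). Then liminf_{n→∞} ∫_X [λ₊·G_{ε_n}(u_n − v) + λ₋·G_{ε_n}(v − u_n)] dμ ≥ Ψ_v(u) = ∫_X [λ₊·(u − v)⁺ + λ₋·(u − v)⁻] dμ. -/
open MeasureTheory Filter
open scoped ENNReal NNReal

/-- The regularization `G_ε` of the positive part function. -/
noncomputable def Geps (ε t : ℝ) : ℝ :=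
  if t ≤ 0 then 0 else if t ≤ ε then t ^ 2 / (2 * ε) else t - ε / 2

lemma Geps_nonneg {ε : ℝ} (hε : 0 < ε) (t : ℝ) : 0 ≤ Geps ε t := by
  unfold Geps
  split_ifs with h1 h2
  · exact le_rfl
  · positivity
  · push_neg at h1 h2; nlinarith

lemma Geps_le_max {ε : ℝ} (hε : 0 < ε) (t : ℝ) : Geps ε t ≤ max t 0 := by
  unfold Geps
  split_ifs with h1 h2
  · exact le_max_right _ _
  · push_neg at h1
    have : t ^ 2 / (2 * ε) ≤ t := by
      rw [div_le_iff₀ (by positivity)]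
      nlinarith
    exact this.trans (le_max_left _ _)
  · push_neg at h1 h2
    exact (by linarith : t - ε / 2 ≤ t).trans (le_max_left _ _)

lemma max_sub_Geps_le {ε : ℝ} (hε : 0 < ε) (t : ℝ) :
    max t 0 - Geps ε t ≤ min |t| (ε / 2) := by
  unfold Geps
  rw [le_min_iff]
  split_ifs with h1 h2
  · constructor
    · simpa [max_eq_right h1] using abs_nonneg t
    · simp [max_eq_right h1]; positivity
  · push_neg at h1
    rw [max_eq_left h1.le, abs_of_pos h1]
    constructor
    · have h0 : 0 ≤ t ^ 2 / (2 * ε) := by positivity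
      linarith
    · have h1 : ε / 2 + t ^ 2 / (2 * ε) - t = (ε - t) ^ 2 / (2 * ε) := by
        field_simp
        ring
      have h2 : 0 ≤ (ε - t) ^ 2 / (2 * ε) := by positivity
      linarith
  · push_neg at h1 h2
    rw [max_eq_left h1.le, abs_of_pos h1]
    constructor
    · linarith
    · linarith

lemma continuous_Geps {ε : ℝ} (hε : 0 < ε) : Continuous (Geps ε) := by
  have h1 : Continuous fun t : ℝ => if t ≤ ε then t ^ 2 / (2 * ε) else t - ε / 2 := by
    apply Continuous.if_le (by fun_prop) (by fun_prop) continuous_id continuous_const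
    intro x hx
    simp only [id_eq] at hx
    have hε' : ε ≠ 0 := ne_of_gt hε
    rw [hx]
    field_simp
    ring
  have h2 : Continuous fun t : ℝ =>
      if t ≤ 0 then (0 : ℝ) else if t ≤ ε then t ^ 2 / (2 * ε) else t - ε / 2 := by
    apply Continuous.if_le continuous_const h1 continuous_id continuous_const
    intro x hx
    subst hx
    simp [hε.le]
  exact h2

theorem stmt12 {X : Type*} [MeasurableSpace X] (μ : Measure X)
    (p p' : ℝ) (hp : 1 < p) (hp' : p' = p / (p - 1))
    (lp lm v : X → ℝ)
    (hlp : MemLp lp (ENNReal.ofReal p') μ) (hlm : MemLp lm (ENNReal.ofReal p') μ)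
    (hlp0 : ∀ᵐ x ∂μ, 0 ≤ lp x) (hlm0 : ∀ᵐ x ∂μ, 0 ≤ lm x)
    (hv : MemLp v (ENNReal.ofReal p) μ)
    (ε : ℕ → ℝ) (hε : ∀ n, 0 < ε n) (hε0 : Tendsto ε atTop (nhds 0))
    (u : ℕ → X → ℝ) (u₀ : X → ℝ)
    (hu : ∀ n, MemLp (u n) (ENNReal.ofReal p) μ) (hu₀ : MemLp u₀ (ENNReal.ofReal p) μ)
    (huconv : Tendsto (fun n => eLpNorm (fun x => u n x - u₀ x) (ENNReal.ofReal p) μ)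
      atTop (nhds 0)) :
    (∫ x, (lp x * max (u₀ x - v x) 0 + lm x * max (v x - u₀ x) 0) ∂μ) ≤
      atTop.liminf
        (fun n => ∫ x, (lp x * Geps (ε n) (u n x - v x) + lm x * Geps (ε n) (v x - u n x)) ∂μ) := by
  have hpq : p.HolderConjugate p' := by
    rw [hp']; exact Real.HolderConjugate.conjExponent hp
  set q : ℝ≥0∞ := ENNReal.ofReal p with hq
  set q' : ℝ≥0∞ := ENNReal.ofReal p' with hq'
  have hq1 : (1 : ℝ≥0∞) / 1 = 1 / q' + 1 / q := by
    simp only [one_div]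
    rw [inv_one]
    exact (hpq.symm.inv_add_inv_ennreal).symm
  -- product integrability (Hölder)
  have memL1 : ∀ (f g : X → ℝ), MemLp f q' μ → MemLp g q μ →
      Integrable (fun x => f x * g x) μ := by
    intro f g hf hg
    rw [← memLp_one_iff_integrable]
    have h := hg.smul hf (r := 1) (hpqr := ⟨by rw [inv_one]; simpa [one_div] using hq1.symm⟩)
    have he : f • g = fun x => f x * g x := rfl
    rwa [he] at h
  set L : X → ℝ := fun x => ‖lp x‖ + ‖lm x‖ with hLdef
  have hLmem : MemLp L q' μ := hlp.norm.add hlm.norm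
  have hL0 : ∀ x, 0 ≤ L x := fun x => add_nonneg (norm_nonneg _) (norm_nonneg _)
  have hlpL : ∀ x, lp x ≤ L x := fun x => by
    simp only [hLdef, Real.norm_eq_abs]
    have := le_abs_self (lp x); have := abs_nonneg (lm x); linarith
  have hlmL : ∀ x, lm x ≤ L x := fun x => by
    simp only [hLdef, Real.norm_eq_abs]
    have := le_abs_self (lm x); have := abs_nonneg (lp x); linarith
  -- MemLp helpers
  have hposmem : ∀ (w : X → ℝ), MemLp w q μ → MemLp (fun x => max (w x) 0) q μ := by
    intro w hw
    refine hw.of_le ((hw.1.aemeasurable.max aemeasurable_const).aestronglyMeasurable) ?_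
    filter_upwards with x
    simp only [Real.norm_eq_abs]
    rw [abs_of_nonneg (le_max_right _ _)]
    exact max_le (le_abs_self _) (abs_nonneg _)
  have hminmem : ∀ (w : X → ℝ) (c : ℝ), 0 ≤ c → MemLp w q μ →
      MemLp (fun x => min |w x| c) q μ := by
    intro w c hc hw
    have hasm : AEStronglyMeasurable (fun x => min |w x| c) μ := by
      have h1 : AEMeasurable (fun x => min ‖w x‖ c) μ :=
        (hw.1.norm.aemeasurable).min aemeasurable_const
      have h2 : (fun x => min ‖w x‖ c) = fun x => min |w x| c := by
        funext x; rw [Real.norm_eq_abs]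
      rw [h2] at h1
      exact h1.aestronglyMeasurable
    refine hw.of_le hasm ?_
    filter_upwards with x
    simp only [Real.norm_eq_abs]
    rw [abs_of_nonneg (le_min (abs_nonneg _) hc)]
    exact min_le_left _ _
  have habsmem : ∀ (w : X → ℝ), MemLp w q μ → MemLp (fun x => |w x|) q μ := by
    intro w hw
    have := hw.norm
    simpa [Real.norm_eq_abs] using this
  have hGmem : ∀ n (w : X → ℝ), MemLp w q μ → MemLp (fun x => Geps (ε n) (w x)) q μ := by
    intro n w hw
    refine hw.of_le ((continuous_Geps (hε n)).comp_aestronglyMeasurable hw.1) ?_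
    filter_upwards with x
    simp only [Real.norm_eq_abs]
    rw [abs_of_nonneg (Geps_nonneg (hε n) _)]
    exact (Geps_le_max (hε n) _).trans (max_le (le_abs_self _) (abs_nonneg _))
  -- memℒp of various functions
  have hwn : ∀ n, MemLp (fun x => u n x - v x) q μ := fun n => (hu n).sub hv
  have hwn' : ∀ n, MemLp (fun x => v x - u n x) q μ := fun n => hv.sub (hu n)
  have hw0 : MemLp (fun x => u₀ x - v x) q μ := hu₀.sub hv
  have hw0' : MemLp (fun x => v x - u₀ x) q μ := hv.sub hu₀
  have hδ : ∀ n, MemLp (fun x => u n x - u₀ x) q μ := fun n => (hu n).sub hu₀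
  -- integrability of all terms
  have int_lp_pos : ∀ n, Integrable (fun x => lp x * max (u n x - v x) 0) μ :=
    fun n => memL1 _ _ hlp (hposmem _ (hwn n))
  have int_lm_pos : ∀ n, Integrable (fun x => lm x * max (v x - u n x) 0) μ :=
    fun n => memL1 _ _ hlm (hposmem _ (hwn' n))
  have int_lp_pos0 : Integrable (fun x => lp x * max (u₀ x - v x) 0) μ :=
    memL1 _ _ hlp (hposmem _ hw0)
  have int_lm_pos0 : Integrable (fun x => lm x * max (v x - u₀ x) 0) μ :=
    memL1 _ _ hlm (hposmem _ hw0')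
  have int_lpG : ∀ n, Integrable (fun x => lp x * Geps (ε n) (u n x - v x)) μ :=
    fun n => memL1 _ _ hlp (hGmem n _ (hwn n))
  have int_lmG : ∀ n, Integrable (fun x => lm x * Geps (ε n) (v x - u n x)) μ :=
    fun n => memL1 _ _ hlm (hGmem n _ (hwn' n))
  have int_Lmin : ∀ n, Integrable (fun x => L x * min |u n x - v x| (ε n / 2)) μ :=
    fun n => memL1 _ _ hLmem (hminmem _ _ (by linarith [hε n]) (hwn n))
  have int_Lmin0 : ∀ n, Integrable (fun x => L x * min |u₀ x - v x| (ε n / 2)) μ :=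
    fun n => memL1 _ _ hLmem (hminmem _ _ (by linarith [hε n]) hw0)
  have int_Labs : ∀ n, Integrable (fun x => L x * |u n x - u₀ x|) μ :=
    fun n => memL1 _ _ hLmem (habsmem _ (hδ n))
  have int_Labs0 : Integrable (fun x => L x * |u₀ x - v x|) μ :=
    memL1 _ _ hLmem (habsmem _ hw0)
  -- the sequences
  set a : ℕ → ℝ := fun n => ∫ x, L x * |u n x - u₀ x| ∂μ with ha_def
  set T : ℕ → ℝ := fun n => ∫ x, L x * min |u₀ x - v x| (ε n / 2) ∂μ with hT_def
  set Φ : ℕ → ℝ := fun n => ∫ x, (lp x * max (u n x - v x) 0 + lm x * max (v x - u n x) 0) ∂μ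
    with hΦ_def
  set D : ℕ → ℝ := fun n => ∫ x, L x * min |u n x - v x| (ε n / 2) ∂μ with hD_def
  -- a → 0 via Hölder
  have ha0 : Tendsto a atTop (nhds 0) := by
    have hb : Tendsto (fun n => (eLpNorm (fun x => u n x - u₀ x) q μ).toReal) atTop (nhds 0) := by
      have h := (ENNReal.tendsto_toReal (by simp : (0:ℝ≥0∞) ≠ ∞)).comp huconv
      simpa [Function.comp_def] using h
    have haK : ∀ n, a n ≤ (eLpNorm L q' μ).toReal *
        (eLpNorm (fun x => u n x - u₀ x) q μ).toReal := by
      intro n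
      have hprod : AEStronglyMeasurable (fun x => L x * (u n x - u₀ x)) μ :=
        hLmem.1.mul (hδ n).1
      have h1 : a n = ∫ x, ‖L x * (u n x - u₀ x)‖ ∂μ := by
        simp only [ha_def]
        congr 1
        funext x
        rw [Real.norm_eq_abs, abs_mul, abs_of_nonneg (hL0 x)]
      have h2 : ∫ x, ‖L x * (u n x - u₀ x)‖ ∂μ =
          (eLpNorm (fun x => L x * (u n x - u₀ x)) 1 μ).toReal := by
        rw [integral_norm_eq_lintegral_enorm hprod, eLpNorm_one_eq_lintegral_enorm]
      have h3 : eLpNorm (fun x => L x * (u n x - u₀ x)) 1 μ ≤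
          eLpNorm L q' μ * eLpNorm (fun x => u n x - u₀ x) q μ := by
        have h := eLpNorm_smul_le_mul_eLpNorm (f := fun x => u n x - u₀ x) (φ := L)
          (hδ n).1 hLmem.1 (p := q') (q := q) (r := 1) (hpqr := ⟨by rw [inv_one]; simpa [one_div] using hq1.symm⟩)
        have he : L • (fun x => u n x - u₀ x) = fun x => L x * (u n x - u₀ x) := rfl
        rwa [he] at h
      rw [h1, h2, ← ENNReal.toReal_mul]
      exact ENNReal.toReal_mono
        (ENNReal.mul_ne_top hLmem.eLpNorm_ne_top (hδ n).eLpNorm_ne_top) h3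
    have hnn : ∀ n, 0 ≤ a n := fun n =>
      integral_nonneg fun x => mul_nonneg (hL0 x) (abs_nonneg _)
    have hlim : Tendsto (fun n => (eLpNorm L q' μ).toReal *
        (eLpNorm (fun x => u n x - u₀ x) q μ).toReal) atTop (nhds 0) := by
      simpa using tendsto_const_nhds.mul hb
    exact squeeze_zero hnn haK hlim
  -- T → 0 via dominated convergence
  have hT0 : Tendsto T atTop (nhds 0) := by
    have h := tendsto_integral_of_dominated_convergence (μ := μ)
      (F := fun n x => L x * min |u₀ x - v x| (ε n / 2)) (f := fun _ => (0:ℝ))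
      (bound := fun x => L x * |u₀ x - v x|)
      (fun n => (int_Lmin0 n).1)
      int_Labs0
      (fun n => by
        filter_upwards with x
        rw [Real.norm_eq_abs, abs_mul, abs_of_nonneg (hL0 x),
          abs_of_nonneg (le_min (abs_nonneg _) (by linarith [hε n]))]
        exact mul_le_mul_of_nonneg_left (min_le_left _ _) (hL0 x))
      (by
        filter_upwards with x
        have hmin : Tendsto (fun n => min |u₀ x - v x| (ε n / 2)) atTop (nhds 0) := by
          have := (tendsto_const_nhds (x := |u₀ x - v x|) (f := atTop)).min
            (hε0.div_const 2)
          simpa [min_eq_right (abs_nonneg (u₀ x - v x))] using this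
        simpa using tendsto_const_nhds.mul hmin)
    simpa using h
  -- Φ → Φ₀
  have hΦconv : Tendsto Φ atTop
      (nhds (∫ x, (lp x * max (u₀ x - v x) 0 + lm x * max (v x - u₀ x) 0) ∂μ)) := by
    have key : ∀ n, |Φ n - ∫ x, (lp x * max (u₀ x - v x) 0 + lm x * max (v x - u₀ x) 0) ∂μ|
        ≤ a n := by
      intro n
      have hint1 : Integrable (fun x => lp x * max (u n x - v x) 0 +
          lm x * max (v x - u n x) 0) μ := (int_lp_pos n).add (int_lm_pos n)
      have hint0 : Integrable (fun x => lp x * max (u₀ x - v x) 0 +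
          lm x * max (v x - u₀ x) 0) μ := int_lp_pos0.add int_lm_pos0
      have heq : Φ n - ∫ x, (lp x * max (u₀ x - v x) 0 + lm x * max (v x - u₀ x) 0) ∂μ =
          ∫ x, ((lp x * max (u n x - v x) 0 + lm x * max (v x - u n x) 0) -
            (lp x * max (u₀ x - v x) 0 + lm x * max (v x - u₀ x) 0)) ∂μ := by
        rw [integral_sub hint1 hint0]
      rw [heq, ← Real.norm_eq_abs]
      refine (norm_integral_le_integral_norm _).trans ?_
      refine integral_mono (hint1.sub hint0).norm (int_Labs n) ?_
      intro x
      simp only [Real.norm_eq_abs]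
      have h1 : |max (u n x - v x) 0 - max (u₀ x - v x) 0| ≤ |u n x - u₀ x| := by
        have := abs_max_sub_max_le_abs (u n x - v x) (u₀ x - v x) 0
        simpa [sub_sub_sub_cancel_right] using this
      have h2 : |max (v x - u n x) 0 - max (v x - u₀ x) 0| ≤ |u n x - u₀ x| := by
        have := abs_max_sub_max_le_abs (v x - u n x) (v x - u₀ x) 0
        have he : v x - u n x - (v x - u₀ x) = -(u n x - u₀ x) := by ring
        rwa [he, abs_neg] at this
      calc |lp x * max (u n x - v x) 0 + lm x * max (v x - u n x) 0 -
            (lp x * max (u₀ x - v x) 0 + lm x * max (v x - u₀ x) 0)|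
          = |lp x * (max (u n x - v x) 0 - max (u₀ x - v x) 0) +
            lm x * (max (v x - u n x) 0 - max (v x - u₀ x) 0)| := by ring_nf
        _ ≤ |lp x * (max (u n x - v x) 0 - max (u₀ x - v x) 0)| +
            |lm x * (max (v x - u n x) 0 - max (v x - u₀ x) 0)| := abs_add_le _ _
        _ = |lp x| * |max (u n x - v x) 0 - max (u₀ x - v x) 0| +
            |lm x| * |max (v x - u n x) 0 - max (v x - u₀ x) 0| := by
            rw [abs_mul, abs_mul]
        _ ≤ |lp x| * |u n x - u₀ x| + |lm x| * |u n x - u₀ x| := by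
            exact add_le_add (mul_le_mul_of_nonneg_left h1 (abs_nonneg _))
              (mul_le_mul_of_nonneg_left h2 (abs_nonneg _))
        _ = L x * |u n x - u₀ x| := by simp [hLdef, Real.norm_eq_abs]; ring
    have h0 : Tendsto (fun n => Φ n -
        ∫ x, (lp x * max (u₀ x - v x) 0 + lm x * max (v x - u₀ x) 0) ∂μ) atTop (nhds 0) :=
      squeeze_zero_norm (fun n => by simpa [Real.norm_eq_abs] using key n) ha0
    have := h0.add (tendsto_const_nhds
      (x := ∫ x, (lp x * max (u₀ x - v x) 0 + lm x * max (v x - u₀ x) 0) ∂μ) (f := atTop))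
    simpa using this
  -- lower bound I n ≥ Φ n - D n
  have hlow1 : ∀ n, Φ n - D n ≤
      ∫ x, (lp x * Geps (ε n) (u n x - v x) + lm x * Geps (ε n) (v x - u n x)) ∂μ := by
    intro n
    have hint1 : Integrable (fun x => lp x * max (u n x - v x) 0 +
        lm x * max (v x - u n x) 0) μ := (int_lp_pos n).add (int_lm_pos n)
    have heq : Φ n - D n = ∫ x, ((lp x * max (u n x - v x) 0 + lm x * max (v x - u n x) 0)
        - L x * min |u n x - v x| (ε n / 2)) ∂μ := by
      rw [integral_sub hint1 (int_Lmin n)]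
    rw [heq]
    refine integral_mono_ae (hint1.sub (int_Lmin n)) ((int_lpG n).add (int_lmG n)) ?_
    filter_upwards [hlp0, hlm0] with x hlpx hlmx
    set c := ε n / 2
    have hm0 : 0 ≤ min |u n x - v x| c := le_min (abs_nonneg _) (by simp only [c]; linarith [hε n])
    have hA : max (u n x - v x) 0 - Geps (ε n) (u n x - v x) ≤ min |u n x - v x| c :=
      max_sub_Geps_le (hε n) _
    have hB : max (v x - u n x) 0 - Geps (ε n) (v x - u n x) ≤ min |u n x - v x| c := by
      have := max_sub_Geps_le (hε n) (v x - u n x)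
      rwa [abs_sub_comm] at this
    have p1 : lp x * (max (u n x - v x) 0 - Geps (ε n) (u n x - v x)) ≤
        lp x * min |u n x - v x| c := mul_le_mul_of_nonneg_left hA hlpx
    have p2 : lm x * (max (v x - u n x) 0 - Geps (ε n) (v x - u n x)) ≤
        lm x * min |u n x - v x| c := mul_le_mul_of_nonneg_left hB hlmx
    have hsum : lp x + lm x ≤ L x := by
      simp only [hLdef, Real.norm_eq_abs]
      have := le_abs_self (lp x); have := le_abs_self (lm x); linarith
    have p3 : (lp x + lm x) * min |u n x - v x| c ≤ L x * min |u n x - v x| c :=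
      mul_le_mul_of_nonneg_right hsum hm0
    rw [mul_sub] at p1 p2
    rw [add_mul] at p3
    linarith
  -- D n ≤ T n + a n
  have hDbound : ∀ n, D n ≤ T n + a n := by
    intro n
    have heq : T n + a n =
        ∫ x, (L x * min |u₀ x - v x| (ε n / 2) + L x * |u n x - u₀ x|) ∂μ := by
      rw [integral_add (int_Lmin0 n) (int_Labs n)]
    rw [heq]
    refine integral_mono (int_Lmin n) ((int_Lmin0 n).add (int_Labs n)) ?_
    intro x
    have hc : (0:ℝ) ≤ ε n / 2 := by linarith [hε n]
    have hminlem : min |u n x - v x| (ε n / 2) ≤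
        min |u₀ x - v x| (ε n / 2) + |u n x - u₀ x| := by
      have he : u n x - v x = (u₀ x - v x) + (u n x - u₀ x) := by ring
      rw [he]
      rcases le_total |u₀ x - v x| (ε n / 2) with h | h
      · calc min |(u₀ x - v x) + (u n x - u₀ x)| (ε n / 2) ≤ |(u₀ x - v x) + (u n x - u₀ x)| :=
            min_le_left _ _
          _ ≤ |u₀ x - v x| + |u n x - u₀ x| := abs_add_le _ _
          _ = min |u₀ x - v x| (ε n / 2) + |u n x - u₀ x| := by rw [min_eq_left h]
      · calc min |(u₀ x - v x) + (u n x - u₀ x)| (ε n / 2) ≤ ε n / 2 := min_le_right _ _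
          _ = min |u₀ x - v x| (ε n / 2) := (min_eq_right h).symm
          _ ≤ min |u₀ x - v x| (ε n / 2) + |u n x - u₀ x| :=
            le_add_of_nonneg_right (abs_nonneg _)
    calc L x * min |u n x - v x| (ε n / 2) ≤
        L x * (min |u₀ x - v x| (ε n / 2) + |u n x - u₀ x|) :=
          mul_le_mul_of_nonneg_left hminlem (hL0 x)
      _ = L x * min |u₀ x - v x| (ε n / 2) + L x * |u n x - u₀ x| := by ring
  -- combine
  have hlow : ∀ n, Φ n - (T n + a n) ≤
      ∫ x, (lp x * Geps (ε n) (u n x - v x) + lm x * Geps (ε n) (v x - u n x)) ∂μ := by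
    intro n
    have := hlow1 n
    have := hDbound n
    linarith
  have hc : Tendsto (fun n => Φ n - (T n + a n)) atTop
      (nhds (∫ x, (lp x * max (u₀ x - v x) 0 + lm x * max (v x - u₀ x) 0) ∂μ)) := by
    have := hΦconv.sub (hT0.add ha0)
    simpa using this
  rw [← hc.liminf_eq]
  have hup : ∀ n, (∫ x, (lp x * Geps (ε n) (u n x - v x) +
      lm x * Geps (ε n) (v x - u n x)) ∂μ) ≤ Φ n := by
    intro n
    refine integral_mono_ae ((int_lpG n).add (int_lmG n)) ((int_lp_pos n).add (int_lm_pos n)) ?_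
    filter_upwards [hlp0, hlm0] with x hlpx hlmx
    exact add_le_add (mul_le_mul_of_nonneg_left (Geps_le_max (hε n) (u n x - v x)) hlpx)
      (mul_le_mul_of_nonneg_left (Geps_le_max (hε n) (v x - u n x)) hlmx)
  refine liminf_le_liminf (Eventually.of_forall hlow) hc.isBoundedUnder_ge ?_
  exact ((hΦconv.isBoundedUnder_le).mono_le (Eventually.of_forall hup)).isCoboundedUnder_ge
end
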